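/- Under the perturbation scheme with H ⪯ (1/(d(‖w‖² ∨ ε²))) I_d for ε ∈ (0,1): the loss estimate ℓ̃ = d H^{1/2} s ⟨w + H^{-1/2}s, ℓ⟩ satisfies ‖ℓ̃‖² ≤ 4 d² ‖ℓ‖² almost surely, and E[‖ℓ̃‖²] ≤ 2 d ‖ℓ‖². -/

import Mathlib

/-!
At the signed eigenvector `σ vᵢ` (eigenvalue `λᵢ`) the estimate is `d (σ √λᵢ ⟨w, ℓ⟩ + ⟨vᵢ, ℓ⟩) vᵢ`,
so its squared norm is `d² (√λᵢ ⟨w, ℓ⟩ + σ ⟨vᵢ, ℓ⟩)²`. Cauchy–Schwarz and the eigenvalue bound give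
`d λᵢ ⟨w, ℓ⟩² ≤ ‖ℓ‖²`, and `⟨vᵢ, ℓ⟩² ≤ ‖ℓ‖²`; with `(a + b)² ≤ 2a² + 2b²` this is the almost sure
bound. Averaging over the sign kills the cross term, and Parseval `∑ ⟨vᵢ, ℓ⟩² = ‖ℓ‖²` then bounds
the expectation.
-/

open Matrix Finset

section DotProduct

variable {n R : Type*} [Fintype n]

theorem sq_dotProduct_le [CommRing R] [LinearOrder R] [IsStrictOrderedRing R] (x y : n → R) :
    (x ⬝ᵥ y) ^ 2 ≤ (x ⬝ᵥ x) * (y ⬝ᵥ y) := by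
  simpa only [dotProduct, sq] using sum_mul_sq_le_sq_mul_sq univ x y

theorem sum_sq_dotProduct_of_orthonormal [CommRing R] [DecidableEq n] {v : n → n → R}
    (horth : ∀ i j, v i ⬝ᵥ v j = if i = j then 1 else 0) (x : n → R) :
    ∑ i, (v i ⬝ᵥ x) ^ 2 = x ⬝ᵥ x := by
  have hVVt : of v * (of v)ᵀ = 1 := by
    ext i j
    simpa [mul_apply, one_apply, dotProduct] using horth i j
  calc ∑ i, (v i ⬝ᵥ x) ^ 2 = of v *ᵥ x ⬝ᵥ of v *ᵥ x := by
        simp only [dotProduct, mulVec, of_apply, sq]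
    _ = x ⬝ᵥ x := by
        rw [dotProduct_mulVec, ← mulVec_transpose, mulVec_mulVec, mul_eq_one_comm.mp hVVt,
          one_mulVec]

end DotProduct

theorem mul_sq_add_mul_sq_le {d : ℕ} {a b σ L : ℝ} (hσ : σ ^ 2 = 1) (ha : d * a ^ 2 ≤ L)
    (hb : b ^ 2 ≤ L) : (d : ℝ) ^ 2 * (a + σ * b) ^ 2 ≤ 4 * d ^ 2 * L := by
  have hd : (d : ℝ) ≤ d ^ 2 := by exact_mod_cast Nat.le_self_pow two_ne_zero d
  have hsq : (a + σ * b) ^ 2 ≤ 2 * a ^ 2 + 2 * b ^ 2 := by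
    nlinarith [sq_nonneg (a - σ * b)]
  nlinarith [sq_nonneg b, sq_nonneg (d : ℝ), mul_le_mul_of_nonneg_left hsq (sq_nonneg (d : ℝ))]

theorem one_div_mul_sum_sq_add_sq_sub_le {d : ℕ} {a b : Fin d → ℝ} {L : ℝ}
    (ha : ∀ i, d * a i ^ 2 ≤ L) (hb : ∑ i, b i ^ 2 = L) :
    1 / (2 * d) * ∑ i, ((d : ℝ) ^ 2 * (a i + b i) ^ 2 + (d : ℝ) ^ 2 * (a i - b i) ^ 2)
      ≤ 2 * d * L := by
  have hsum : ∑ i, ((d : ℝ) ^ 2 * (a i + b i) ^ 2 + (d : ℝ) ^ 2 * (a i - b i) ^ 2)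
      = 2 * d * ∑ i, d * a i ^ 2 + 2 * d ^ 2 * ∑ i, b i ^ 2 := by
    simp only [mul_sum, ← sum_add_distrib]
    exact sum_congr rfl fun i _ => by ring
  have ha' : ∑ i, d * a i ^ 2 ≤ d * L := by
    simpa using sum_le_sum fun i (_ : i ∈ univ) => ha i
  rcases eq_or_ne (d : ℝ) 0 with hd | hd
  · simp [hd]
  · rw [hsum, hb]
    calc 1 / (2 * d) * (2 * d * ∑ i, d * a i ^ 2 + 2 * d ^ 2 * L)
        = ∑ i, d * a i ^ 2 + d * L := by field_simp
      _ ≤ 2 * d * L := by linarith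

theorem mul_le_of_le_one_div_mul {d lam M c L : ℝ} (hd : 0 ≤ d) (hM : 0 ≤ M) (hlam : 0 ≤ lam)
    (hle : lam ≤ 1 / (d * M)) (hc : c ^ 2 ≤ M * L) (hL : 0 ≤ L) : d * (lam * c ^ 2) ≤ L :=
  calc d * (lam * c ^ 2) ≤ d * (lam * (M * L)) := by gcongr
    _ = lam * (d * M) * L := by ring
    _ ≤ L := mul_le_of_le_one_left hL (mul_le_of_le_div₀ zero_le_one (by positivity) hle)

section LossEstimate

variable {n : Type*} [Fintype n]

def lossEstimate (d : ℝ) (Hsqrt Hinvsqrt : Matrix n n ℝ) (w ℓ s : n → ℝ) : n → ℝ :=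
  (d * ((w + Hinvsqrt *ᵥ s) ⬝ᵥ ℓ)) • Hsqrt *ᵥ s

theorem lossEstimate_smul_dotProduct_self {d t σ : ℝ} {Hsqrt Hinvsqrt : Matrix n n ℝ}
    {w ℓ v : n → ℝ} (hv : v ⬝ᵥ v = 1) (ht : t ≠ 0) (hsqrt : Hsqrt *ᵥ v = t • v)
    (hinvsqrt : Hinvsqrt *ᵥ v = t⁻¹ • v) :
    lossEstimate d Hsqrt Hinvsqrt w ℓ (σ • v) ⬝ᵥ lossEstimate d Hsqrt Hinvsqrt w ℓ (σ • v)
      = (d * σ) ^ 2 * (t * (w ⬝ᵥ ℓ) + σ * (v ⬝ᵥ ℓ)) ^ 2 := by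
  simp only [lossEstimate, mulVec_smul, hsqrt, hinvsqrt, smul_dotProduct, dotProduct_smul,
    add_dotProduct, smul_eq_mul, hv]
  field_simp

end LossEstimate

theorem stmt3_general {d : ℕ}
    (Hsqrt Hinvsqrt : Matrix (Fin d) (Fin d) ℝ)
    (v : Fin d → (Fin d → ℝ)) (lam : Fin d → ℝ) (ε : ℝ)
    (hlam : ∀ i, 0 < lam i)
    (horth : ∀ i j, v i ⬝ᵥ v j = if i = j then (1 : ℝ) else 0)
    (hHsqrt : ∀ i, Hsqrt.mulVec (v i) = Real.sqrt (lam i) • v i)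
    (hHinvsqrt : ∀ i, Hinvsqrt.mulVec (v i) = (Real.sqrt (lam i))⁻¹ • v i)
    (w ℓ : Fin d → ℝ)
    (hlam_le : ∀ i, lam i ≤ 1 / ((d : ℝ) * max (w ⬝ᵥ w) (ε ^ 2)))
    (est : (Fin d → ℝ) → (Fin d → ℝ))
    (hest : ∀ s, est s = (((d : ℝ) * ((w + Hinvsqrt.mulVec s) ⬝ᵥ ℓ)) • Hsqrt.mulVec s)) :
    (∀ i, ∀ σ : ℝ, σ = 1 ∨ σ = -1 →
        est (σ • v i) ⬝ᵥ est (σ • v i) ≤ 4 * (d : ℝ) ^ 2 * (ℓ ⬝ᵥ ℓ)) ∧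
    (1 / (2 * (d : ℝ))) *
      (∑ i : Fin d, (est (v i) ⬝ᵥ est (v i) + est (-(v i)) ⬝ᵥ est (-(v i))))
      ≤ 2 * (d : ℝ) * (ℓ ⬝ᵥ ℓ) := by
  obtain rfl : est = lossEstimate d Hsqrt Hinvsqrt w ℓ := funext hest
  have hL : 0 ≤ ℓ ⬝ᵥ ℓ := sum_nonneg fun i _ => mul_self_nonneg (ℓ i)
  have hparseval := sum_sq_dotProduct_of_orthonormal horth ℓ
  have hnorm (i : Fin d) (σ : ℝ) (hσ : σ ^ 2 = 1) :
      lossEstimate d Hsqrt Hinvsqrt w ℓ (σ • v i) ⬝ᵥ lossEstimate d Hsqrt Hinvsqrt w ℓ (σ • v i)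
        = (d : ℝ) ^ 2 * (√(lam i) * (w ⬝ᵥ ℓ) + σ * (v i ⬝ᵥ ℓ)) ^ 2 := by
    rw [lossEstimate_smul_dotProduct_self (by simpa using horth i i)
      (Real.sqrt_pos.2 (hlam i)).ne' (hHsqrt i) (hHinvsqrt i), mul_pow, hσ, mul_one]
  have hscale (i : Fin d) : d * (√(lam i) * (w ⬝ᵥ ℓ)) ^ 2 ≤ ℓ ⬝ᵥ ℓ := by
    rw [mul_pow, Real.sq_sqrt (hlam i).le]
    refine mul_le_of_le_one_div_mul d.cast_nonneg (le_max_of_le_right (sq_nonneg ε)) (hlam i).le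
      (hlam_le i) ((sq_dotProduct_le w ℓ).trans ?_) hL
    gcongr
    exact le_max_left _ _
  have hproj (i : Fin d) : (v i ⬝ᵥ ℓ) ^ 2 ≤ ℓ ⬝ᵥ ℓ :=
    hparseval ▸ single_le_sum (fun j _ => sq_nonneg (v j ⬝ᵥ ℓ)) (mem_univ i)
  refine ⟨fun i σ hσ => ?_, ?_⟩
  · have hσ2 : σ ^ 2 = 1 := by rcases hσ with rfl | rfl <;> norm_num
    rw [hnorm i σ hσ2]
    exact mul_sq_add_mul_sq_le hσ2 (hscale i) (hproj i)
  · convert one_div_mul_sum_sq_add_sq_sub_le hscale hparseval using 3 with i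
    have hplus := hnorm i 1 (one_pow 2)
    have hminus := hnorm i (-1) (by norm_num)
    rw [one_smul] at hplus
    rw [neg_one_smul] at hminus
    rw [hplus, hminus]
    ring

/-- If the eigenvalues of `H` are at most `1/(d(‖w‖² ∨ ε²))` for `ε ∈ (0,1)`, then the
loss estimate `ℓ̃ = d H^{1/2} s ⟨w + H^{-1/2}s, ℓ⟩` satisfies `‖ℓ̃‖² ≤ 4 d² ‖ℓ‖²`
almost surely and `E[‖ℓ̃‖²] ≤ 2 d ‖ℓ‖²`. -/
theorem stmt3 {d : ℕ} (hd : 0 < d)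
    (H Hsqrt Hinvsqrt : Matrix (Fin d) (Fin d) ℝ)
    (v : Fin d → (Fin d → ℝ)) (lam : Fin d → ℝ) (ε : ℝ)
    (hε0 : 0 < ε) (hε1 : ε < 1)
    (hlam : ∀ i, 0 < lam i)
    (horth : ∀ i j, v i ⬝ᵥ v j = if i = j then (1 : ℝ) else 0)
    (hH : ∀ i, H.mulVec (v i) = lam i • v i)
    (hHsqrt : ∀ i, Hsqrt.mulVec (v i) = Real.sqrt (lam i) • v i)
    (hHinvsqrt : ∀ i, Hinvsqrt.mulVec (v i) = (Real.sqrt (lam i))⁻¹ • v i)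
    (w ℓ : Fin d → ℝ)
    (hlam_le : ∀ i, lam i ≤ 1 / ((d : ℝ) * max (w ⬝ᵥ w) (ε ^ 2)))
    (est : (Fin d → ℝ) → (Fin d → ℝ))
    (hest : ∀ s, est s = (((d : ℝ) * ((w + Hinvsqrt.mulVec s) ⬝ᵥ ℓ)) • Hsqrt.mulVec s)) :
    (∀ i, ∀ σ : ℝ, σ = 1 ∨ σ = -1 →
        est (σ • v i) ⬝ᵥ est (σ • v i) ≤ 4 * (d : ℝ) ^ 2 * (ℓ ⬝ᵥ ℓ)) ∧
    (1 / (2 * (d : ℝ))) *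
      (∑ i : Fin d, (est (v i) ⬝ᵥ est (v i) + est (-(v i)) ⬝ᵥ est (-(v i))))
      ≤ 2 * (d : ℝ) * (ℓ ⬝ᵥ ℓ) :=
  stmt3_general Hsqrt Hinvsqrt v lam ε hlam horth hHsqrt hHinvsqrt w ℓ hlam_le est hest
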